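/- Let X be a topological space and g : X × X → ℝ a continuous function. Let (A, B) be a pair of nonempty subsets of X which is a topologically semi-sharp proximinal pair with respect to g and such that A_g and B_g are nonempty. Then (A_g, B_g) is a topologically semi-sharp proximinal pair with respect to g, i.e., for each x ∈ A_g there exists at most one y ∈ B_g with |g(x,y)| = D_g(A_g, B_g). -/

import Mathlib

open Filter Topology

/-- `D_g(A,B) = inf {|g x y| : x ∈ A, y ∈ B}`. -/
noncomputable def Dg {X : Type*} (g : X → X → ℝ) (A B : Set X) : ℝ :=
  sInf {r : ℝ | ∃ x ∈ A, ∃ y ∈ B, r = |g x y|}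

/-- `A_g = {x ∈ A : |g x y| = D_g(A,B) for some y ∈ B}`. -/
noncomputable def proxA {X : Type*} (g : X → X → ℝ) (A B : Set X) : Set X :=
  {x ∈ A | ∃ y ∈ B, |g x y| = Dg g A B}

/-- `B_g = {y ∈ B : |g x y| = D_g(A,B) for some x ∈ A}`. -/
noncomputable def proxB {X : Type*} (g : X → X → ℝ) (A B : Set X) : Set X :=
  {y ∈ B | ∃ x ∈ A, |g x y| = Dg g A B}

/-- `(A, B)` is a topologically semi-sharp proximinal pair with respect to `g`:
for each `x ∈ A` there is at most one `x* ∈ B` with `|g x x*| = D_g(A,B)`. -/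
def TopSemiSharpProximinal {X : Type*} (g : X → X → ℝ) (A B : Set X) : Prop :=
  ∀ x ∈ A, ∀ y₁ ∈ B, ∀ y₂ ∈ B,
    |g x y₁| = Dg g A B → |g x y₂| = Dg g A B → y₁ = y₂

/-! The sharp nearest points of `(A, B)` already realise `D_g(A, B)`, and shrinking `A` and `B`
cannot lower an infimum, so `D_g(A_g, B_g) = D_g(A, B)`; uniqueness of nearest points then
passes from `(A, B)` to the smaller pair `(A_g, B_g)`. -/

section Proximinal

variable {X : Type*} (g : X → X → ℝ)

lemma Dg_le_abs {A B : Set X} {x y : X} (hx : x ∈ A) (hy : y ∈ B) : Dg g A B ≤ |g x y| :=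
  csInf_le ⟨0, fun _ ⟨_, _, _, _, hr⟩ => hr ▸ abs_nonneg _⟩ ⟨x, hx, y, hy, rfl⟩

lemma Dg_le_Dg_of_subset {A B A' B' : Set X} (hA : A' ⊆ A) (hB : B' ⊆ B)
    (hA' : A'.Nonempty) (hB' : B'.Nonempty) : Dg g A B ≤ Dg g A' B' := by
  obtain ⟨x, hx⟩ := hA'
  obtain ⟨y, hy⟩ := hB'
  refine le_csInf ⟨|g x y|, x, hx, y, hy, rfl⟩ ?_
  rintro _ ⟨a, ha, b, hb, rfl⟩
  exact Dg_le_abs g (hA ha) (hB hb)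

lemma Dg_proxA_proxB {A B : Set X} (h : (proxA g A B).Nonempty) :
    Dg g (proxA g A B) (proxB g A B) = Dg g A B := by
  obtain ⟨x, hxA, y, hyB, hxy⟩ := h
  have hx : x ∈ proxA g A B := ⟨hxA, y, hyB, hxy⟩
  have hy : y ∈ proxB g A B := ⟨hyB, x, hxA, hxy⟩
  refine le_antisymm ?_ (Dg_le_Dg_of_subset g (fun _ h => h.1) (fun _ h => h.1) ⟨x, hx⟩ ⟨y, hy⟩)
  calc Dg g (proxA g A B) (proxB g A B) ≤ |g x y| := Dg_le_abs g hx hy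
    _ = Dg g A B := hxy

lemma TopSemiSharpProximinal.mono {A B A' B' : Set X} (h : TopSemiSharpProximinal g A B)
    (hA : A' ⊆ A) (hB : B' ⊆ B) (hD : Dg g A' B' = Dg g A B) :
    TopSemiSharpProximinal g A' B' := by
  intro x hx y₁ hy₁ y₂ hy₂ h₁ h₂
  rw [hD] at h₁ h₂
  exact h x (hA hx) y₁ (hB hy₁) y₂ (hB hy₂) h₁ h₂

end Proximinal

theorem stmt_6_general {X : Type*} (g : X → X → ℝ)
    (A B : Set X)
    (hpair : TopSemiSharpProximinal g A B) :
    TopSemiSharpProximinal g (proxA g A B) (proxB g A B) := by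
  intro x hx
  exact hpair.mono g (fun _ h => h.1) (fun _ h => h.1) (Dg_proxA_proxB g ⟨x, hx⟩) x hx

theorem stmt_6 {X : Type*} [TopologicalSpace X] (g : X → X → ℝ)
    (hg : Continuous (Function.uncurry g))
    (A B : Set X) (hA : A.Nonempty) (hB : B.Nonempty)
    (hpair : TopSemiSharpProximinal g A B)
    (hAg : (proxA g A B).Nonempty) (hBg : (proxB g A B).Nonempty) :
    TopSemiSharpProximinal g (proxA g A B) (proxB g A B) :=
  stmt_6_general g A B hpair
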